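/- arXiv:0911.1090 — 8 statements merged into one kernel-verified Lean document; each statement's English description precedes it below -/
import Mathlib

section
/- Let (ν_k)_{k≥1} be a strictly increasing sequence of positive reals tending to infinity, and let (N_k)_{k≥1} be reals with N_k ≥ 1 for every k. Suppose the weight set is not too dense: there exist constants L ≥ 0 and K ≥ 0 such that for every natural number n ≥ 0, the number of indices k with ν_k < n is at most L·n^K. Then limsup_{k→∞} (ln N_k)/ν_k = limsup_{k→∞} (ln(Σ_{l=1}^k N_l))/ν_k. -/
/-!
Once `c` exceeds the conventional capacity (so `c ≥ 0`, as `N ≥ 1`), every term satisfies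
`N l ≤ A * exp (c * ν l)` for a single constant `A`, and since `ν` is increasing the partial sum
up to `k` is at most `(k + 1) * A * exp (c * ν k)`. The density condition gives
`k + 1 ≤ L * (ν k + 1) ^ K`, so `log (k + 1) = o(ν k)` and the factor `k + 1` is invisible
after dividing by `ν k`.
-/
open Filter Real Asymptotics Finset Topology

lemma isLittleO_log_add_one_id_atTop : (fun x : ℝ => log (x + 1)) =o[atTop] id :=
  (isLittleO_log_id_atTop.comp_tendsto (tendsto_atTop_add_const_right _ 1 tendsto_id)).trans_isBigO
    ((isBigO_refl id atTop).add (isLittleO_const_id_atTop 1).isBigO)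

lemma add_one_le_mul_rpow_of_not_too_dense {ν : ℕ → ℝ} {L K : ℝ} (hL : 0 ≤ L) (hK : 0 ≤ K)
    (h : ∀ n k : ℕ, ν k < n → (k : ℝ) + 1 ≤ L * (n : ℝ) ^ K) {k : ℕ} (hk : 0 ≤ ν k) :
    (k : ℝ) + 1 ≤ L * (ν k + 1) ^ K := by
  have hn : ν k < (⌊ν k⌋₊ + 1 : ℕ) := by push_cast; exact Nat.lt_floor_add_one _
  refine (h _ k hn).trans (mul_le_mul_of_nonneg_left (rpow_le_rpow (by positivity) ?_ hK) hL)
  push_cast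
  linarith [Nat.floor_le hk]

lemma isLittleO_log_add_one_of_le_mul_rpow {ν : ℕ → ℝ} {L K : ℝ}
    (hν : Tendsto ν atTop atTop) (h : ∀ k : ℕ, (k : ℝ) + 1 ≤ L * (ν k + 1) ^ K) :
    (fun k : ℕ => log ((k : ℝ) + 1)) =o[atTop] ν := by
  have hL : L ≠ 0 := by rintro rfl; have := h 0; norm_num at this
  have hg : (fun x : ℝ => log L + K * log (x + 1)) =o[atTop] id :=
    (isLittleO_const_id_atTop _).add (isLittleO_log_add_one_id_atTop.const_mul_left K)
  refine IsBigO.trans_isLittleO (IsBigO.of_bound 1 ?_) (hg.comp_tendsto hν)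
  filter_upwards [hν.eventually_ge_atTop 0] with k hk
  have hlog : log ((k : ℝ) + 1) ≤ log L + K * log (ν k + 1) := by
    rw [← log_rpow (by linarith), ← log_mul hL (by positivity)]
    exact log_le_log (by positivity) (h k)
  rw [one_mul, norm_of_nonneg (log_nonneg (by linarith [k.cast_nonneg (α := ℝ)]))]
  exact hlog.trans (le_abs_self _)

lemma log_sum_range_le_of_le_mul_exp {N ν : ℕ → ℝ} (hν : Monotone ν) {A c : ℝ} (hc : 0 ≤ c)
    (hN_pos : ∀ l, 0 < N l) (hN : ∀ l, N l ≤ A * exp (c * ν l)) (k : ℕ) :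
    log (∑ l ∈ range (k + 1), N l) ≤ log A + log ((k : ℝ) + 1) + c * ν k := by
  have hA : 0 < A := (pos_iff_pos_of_mul_pos ((hN_pos 0).trans_le (hN 0))).2 (exp_pos _)
  have hsum : ∑ l ∈ range (k + 1), N l ≤ ((k : ℝ) + 1) * (A * exp (c * ν k)) := by
    calc ∑ l ∈ range (k + 1), N l ≤ ∑ _l ∈ range (k + 1), A * exp (c * ν k) := by
          refine sum_le_sum fun l hl => (hN l).trans ?_
          gcongr
          exact hν (Nat.lt_succ_iff.1 (mem_range.1 hl))
      _ = ((k : ℝ) + 1) * (A * exp (c * ν k)) := by simp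
  calc log (∑ l ∈ range (k + 1), N l)
      ≤ log (((k : ℝ) + 1) * (A * exp (c * ν k))) :=
        log_le_log (sum_pos (fun l _ => hN_pos l) nonempty_range_add_one) hsum
    _ = log A + log ((k : ℝ) + 1) + c * ν k := by
        rw [log_mul (by positivity) (by positivity), log_mul hA.ne' (by positivity), log_exp]
        ring

lemma exists_forall_le_mul_of_eventually_le {f g : ℕ → ℝ} (hg : ∀ k, 0 < g k)
    (h : ∀ᶠ k in atTop, f k ≤ g k) : ∃ A, ∀ k, f k ≤ A * g k := by
  have hbdd : IsBoundedUnder (· ≤ ·) atTop fun k => f k / g k :=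
    isBoundedUnder_of_eventually_le (a := 1) <| h.mono fun k hk => (div_le_one (hg k)).2 hk
  obtain ⟨A, hA⟩ := hbdd.bddAbove_range
  exact ⟨A, fun k => (div_le_iff₀ (hg k)).1 (hA ⟨k, rfl⟩)⟩

lemma limsup_log_sum_div_le_of_limsup_lt {ν N : ℕ → ℝ} (hν_mono : Monotone ν)
    (hν_pos : ∀ k, 0 < ν k) (hν_top : Tendsto ν atTop atTop) (hN : ∀ k, 1 ≤ N k)
    (hlog : (fun k : ℕ => log ((k : ℝ) + 1)) =o[atTop] ν) {c : ℝ}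
    (hc : limsup (fun k => ((log (N k) / ν k : ℝ) : EReal)) atTop < c) :
    limsup (fun k => ((log (∑ l ∈ range (k + 1), N l) / ν k : ℝ) : EReal)) atTop ≤ c := by
  have hN_pos k : 0 < N k := one_pos.trans_le (hN k)
  have hc0 : 0 ≤ c := by
    have : (0 : EReal) ≤ limsup (fun k => ((log (N k) / ν k : ℝ) : EReal)) atTop :=
      le_limsup_of_frequently_le' <| Frequently.of_forall fun k =>
        EReal.coe_nonneg.2 (div_nonneg (log_nonneg (hN k)) (hν_pos k).le)
    exact_mod_cast this.trans hc.le
  have hN_le : ∀ᶠ k in atTop, N k ≤ exp (c * ν k) := by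
    filter_upwards [eventually_lt_of_limsup_lt hc] with k hk
    rw [← log_le_iff_le_exp (hN_pos k), ← div_le_iff₀ (hν_pos k)]
    exact_mod_cast hk.le
  obtain ⟨A, hA⟩ := exists_forall_le_mul_of_eventually_le (fun k => exp_pos _) hN_le
  have hdiv : Tendsto (fun k : ℕ => c + (log A + log ((k : ℝ) + 1)) / ν k) atTop (𝓝 c) := by
    have hconst : (fun _ : ℕ => log A) =o[atTop] ν :=
      isLittleO_const_left.2 (Or.inr (tendsto_norm_atTop_atTop.comp hν_top))
    have := (hconst.add hlog).tendsto_div_nhds_zero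
    simpa using tendsto_const_nhds.add this
  calc _ ≤ limsup (fun k : ℕ => ((c + (log A + log ((k : ℝ) + 1)) / ν k : ℝ) : EReal))
          atTop := by
        refine limsup_le_limsup (Eventually.of_forall fun k => EReal.coe_le_coe_iff.2 ?_)
        rw [div_le_iff₀ (hν_pos k), add_mul, div_mul_cancel₀ _ (hν_pos k).ne']
        linarith [log_sum_range_le_of_le_mul_exp hν_mono hc0 hN_pos hA k]
    _ = c := (EReal.tendsto_coe.2 hdiv).limsup_eq

/-- **Theorem 1 (ii).** If the strictly increasing sequence of positive weights
`ν k → ∞` is "not too dense" — i.e. there are constants `L, K ≥ 0` such that for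
every natural `n` the number of indices `k` with `ν k < n` is at most `L·n^K`
(with 0-based indexing, `ν k < n` implies `k + 1 ≤ L·n^K`) — then Shannon's
conventional capacity `limsup ln (N k) / ν k` coincides with the generalized
capacity `limsup ln (∑_{l ≤ k} N l) / ν k`. -/
theorem conventional_capacity_eq_generalized_capacity
    (ν N : ℕ → ℝ)
    (hν_mono : StrictMono ν)
    (hν_pos : ∀ k, 0 < ν k)
    (hν_top : Filter.Tendsto ν Filter.atTop Filter.atTop)
    (hN : ∀ k, 1 ≤ N k)
    (L K : ℝ) (hL : 0 ≤ L) (hK : 0 ≤ K)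
    (h_not_too_dense : ∀ n : ℕ, ∀ k : ℕ, ν k < (n : ℝ) →
      ((k : ℝ) + 1) ≤ L * (n : ℝ) ^ K) :
    Filter.limsup
        (fun k : ℕ => ((Real.log (N k) / ν k : ℝ) : EReal)) Filter.atTop
      = Filter.limsup
          (fun k : ℕ =>
            ((Real.log (∑ l ∈ Finset.range (k + 1), N l) / ν k : ℝ) : EReal))
          Filter.atTop := by
  refine le_antisymm (limsup_le_limsup (Eventually.of_forall fun k => ?_)) ?_
  · have hN_pos : 0 < N k := one_pos.trans_le (hN k)
    exact EReal.coe_le_coe_iff.2 <| div_le_div_of_nonneg_right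
      (log_le_log hN_pos (single_le_sum (fun l _ => (hN l).trans' zero_le_one)
        (self_mem_range_succ k))) (hν_pos k).le
  · have hlog := isLittleO_log_add_one_of_le_mul_rpow hν_top fun k =>
      add_one_le_mul_rpow_of_not_too_dense hL hK h_not_too_dense (hν_pos k).le
    exact EReal.le_of_forall_lt_iff_le.1 fun c hc =>
      limsup_log_sum_div_le_of_limsup_lt hν_mono.monotone hν_pos hν_top hN hlog hc
end

section
/- Let Z be a countable set with a weight function w : Z → ℝ_{>0}, and let R > 0 be a real number such that Σ_{z∈Z} e^{-w(z)·R} = 1 (in particular the family (e^{-w(z)R})_{z∈Z} is summable). Then for every probability mass function p on Z (p(z) ≥ 0, Σ_{z∈Z} p(z) = 1) with finite expected weight E_p[w] = Σ_z p(z)·w(z) < ∞, the entropy H(p) = -Σ_{z∈Z} p(z) ln p(z) satisfies H(p) ≤ R · E_p[w]. -/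
/-!
Gibbs' inequality against the weights `q z = e^{-w z · R}`, which form a probability
distribution: `ln t ≤ t - 1` at `t = q z / p z` gives the termwise bound
`-p z ln p z ≤ q z - p z + R · p z · w z`, and summing it the masses `∑ q = ∑ p = 1` cancel.
-/

open Real

lemma neg_mul_log_le_sub_sub_mul_log {x y : ℝ} (hx : 0 ≤ x) (hy : 0 < y) :
    -(x * log x) ≤ y - x - x * log y := by
  rcases hx.eq_or_lt with rfl | hx
  · simpa using hy.le
  have h := mul_le_mul_of_nonneg_left (log_le_sub_one_of_pos (div_pos hy hx)) hx.le
  rw [log_div hy.ne' hx.ne', mul_sub, mul_sub, mul_one, mul_div_cancel₀ y hx.ne'] at h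
  linarith

section Gibbs

variable {ι : Type*} {p q : ι → ℝ}

lemma summable_neg_mul_log (hp_nonneg : ∀ i, 0 ≤ p i) (hp_le_one : ∀ i, p i ≤ 1)
    (hq_pos : ∀ i, 0 < q i) (hp : Summable p) (hq : Summable q)
    (hpq : Summable fun i => p i * log (q i)) :
    Summable fun i => -(p i * log (p i)) :=
  .of_nonneg_of_le
    (fun i => by
      simpa only [negMulLog, neg_mul] using negMulLog_nonneg (hp_nonneg i) (hp_le_one i))
    (fun i => neg_mul_log_le_sub_sub_mul_log (hp_nonneg i) (hq_pos i)) ((hq.sub hp).sub hpq)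

lemma tsum_neg_mul_log_le (hp_nonneg : ∀ i, 0 ≤ p i) (hq_pos : ∀ i, 0 < q i)
    (hp : Summable p) (hq : Summable q) (hpq : Summable fun i => p i * log (q i))
    (h : Summable fun i => -(p i * log (p i))) :
    ∑' i, -(p i * log (p i)) ≤ ∑' i, q i - ∑' i, p i - ∑' i, p i * log (q i) := by
  rw [← hq.tsum_sub hp, ← (hq.sub hp).tsum_sub hpq]
  exact h.tsum_le_tsum (fun i => neg_mul_log_le_sub_sub_mul_log (hp_nonneg i) (hq_pos i))
    ((hq.sub hp).sub hpq)

end Gibbs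

theorem entropy_le_R_mul_expected_weight_general
    (Z : Type*)
    (w : Z → ℝ)
    (R : ℝ)
    (hq_summable : Summable fun z => Real.exp (-(w z) * R))
    (hq_sum_one : ∑' z, Real.exp (-(w z) * R) = 1)
    (p : Z → ℝ) (hp_nonneg : ∀ z, 0 ≤ p z)
    (hp_summable : Summable p)
    (hp_sum_one : ∑' z, p z = 1)
    (hEw_summable : Summable fun z => p z * w z) :
    (Summable fun z => -(p z * Real.log (p z))) ∧
      (∑' z, -(p z * Real.log (p z))) ≤ R * ∑' z, p z * w z := by
  have hp_le_one : ∀ z, p z ≤ 1 := fun z =>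
    hp_sum_one ▸ hp_summable.le_tsum z fun j _ => hp_nonneg j
  have hq_pos : ∀ z, 0 < exp (-(w z) * R) := fun z => exp_pos _
  have hlog_q : ∀ z, p z * log (exp (-(w z) * R)) = -R * (p z * w z) := fun z => by
    rw [log_exp]; ring
  have hpq : Summable fun z => p z * log (exp (-(w z) * R)) := by
    simpa only [hlog_q] using hEw_summable.mul_left (-R)
  have h_summable :=
    summable_neg_mul_log hp_nonneg hp_le_one hq_pos hp_summable hq_summable hpq
  refine ⟨h_summable, ?_⟩
  calc ∑' z, -(p z * log (p z))
      ≤ ∑' z, exp (-(w z) * R) - ∑' z, p z - ∑' z, p z * log (exp (-(w z) * R)) :=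
        tsum_neg_mul_log_le hp_nonneg hq_pos hp_summable hq_summable hpq h_summable
    _ = R * ∑' z, p z * w z := by
        simp only [hq_sum_one, hp_sum_one, hlog_q, tsum_mul_left]; ring

/-- **Lemma 1 (upper bound).** Let `Z` be a countable set with positive weight
function `w`, and let `R > 0` satisfy `∑_{z ∈ Z} e^{-w z · R} = 1`. Then every
probability mass function `p` on `Z` with finite expected weight
`E_p[w] = ∑ p z · w z < ∞` has entropy `H(p) = -∑ p z · ln (p z)` (in nats,
with `0 · ln 0 = 0`) satisfying `H(p) ≤ R · E_p[w]`; in particular the entropy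
series is summable. -/
theorem entropy_le_R_mul_expected_weight
    (Z : Type*) [Countable Z]
    (w : Z → ℝ) (hw : ∀ z, 0 < w z)
    (R : ℝ) (hR : 0 < R)
    (hq_summable : Summable fun z => Real.exp (-(w z) * R))
    (hq_sum_one : ∑' z, Real.exp (-(w z) * R) = 1)
    (p : Z → ℝ) (hp_nonneg : ∀ z, 0 ≤ p z)
    (hp_summable : Summable p)
    (hp_sum_one : ∑' z, p z = 1)
    (hEw_summable : Summable fun z => p z * w z) :
    (Summable fun z => -(p z * Real.log (p z))) ∧
      (∑' z, -(p z * Real.log (p z))) ≤ R * ∑' z, p z * w z :=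
  entropy_le_R_mul_expected_weight_general Z w R hq_summable hq_sum_one p hp_nonneg hp_summable
    hp_sum_one hEw_summable
end

section
/- Let Z be a countable set with a weight function w : Z → ℝ_{>0}, and let R > 0 be a real number such that Σ_{z∈Z} e^{-w(z)·R} = 1. If p is a probability mass function on Z with finite expected weight E_p[w] = Σ_z p(z)·w(z) < ∞ whose entropy satisfies H(p) = R · E_p[w], then p(z) = e^{-w(z)·R} for all z ∈ Z. -/
/-!
Gibbs' inequality with its equality case: for `p ≥ 0` and `q > 0` of equal total mass, the
Kullback–Leibler divergence `∑ p log (p / q) = ∑ q · klFun (p / q)` is a sum of nonnegative terms,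
so it vanishes only if `p = q`. For `q z = e^{-w z R}` the cross entropy `-∑ p log q` is
`R · E_p[w]`, which by hypothesis is the entropy of `p`, so the divergence is zero.
-/

open Real InformationTheory

theorem mul_klFun_div_eq {p q : ℝ} (hq : 0 < q) :
    q * klFun (p / q) = p * log p - p * log q + q - p := by
  rcases eq_or_ne p 0 with rfl | hp
  · simp [klFun_zero]
  · rw [klFun_apply, log_div hp hq.ne']
    field_simp

theorem eq_of_tsum_mul_log_eq {ι : Type*} {p q : ι → ℝ} (hp : ∀ i, 0 ≤ p i) (hq : ∀ i, 0 < q i)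
    (hps : Summable p) (hqs : Summable q) (hpq : ∑' i, p i = ∑' i, q i)
    (hplogp : Summable fun i => p i * log (p i)) (hplogq : Summable fun i => p i * log (q i))
    (h : ∑' i, p i * log (p i) = ∑' i, p i * log (q i)) : p = q := by
  set f : ι → ℝ := fun i => q i * klFun (p i / q i)
  have hf_nonneg : ∀ i, 0 ≤ f i := fun i =>
    mul_nonneg (hq i).le (klFun_nonneg (div_nonneg (hp i) (hq i).le))
  have hf_eq : f = fun i => p i * log (p i) - p i * log (q i) + q i - p i :=
    funext fun i => mul_klFun_div_eq (hq i)
  have hf_sum : HasSum f 0 := by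
    have := ((hplogp.hasSum.sub hplogq.hasSum).add hqs.hasSum).sub hps.hasSum
    rwa [h, hpq, sub_self, zero_add, sub_self, ← hf_eq] at this
  funext i
  have hfi : f i = 0 := congrFun ((hasSum_zero_iff_of_nonneg hf_nonneg).mp hf_sum) i
  have hklFun : klFun (p i / q i) = 0 := (mul_eq_zero.mp hfi).resolve_left (hq i).ne'
  exact (div_eq_one_iff_eq (hq i).ne').mp
    ((klFun_eq_zero_iff (div_nonneg (hp i) (hq i).le)).mp hklFun)

theorem tsum_mul_pos {ι : Type*} {p w : ι → ℝ} (hp : ∀ i, 0 ≤ p i) (hp_ne : p ≠ 0)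
    (hw : ∀ i, 0 < w i) (hpw : Summable fun i => p i * w i) : 0 < ∑' i, p i * w i := by
  obtain ⟨i, hi⟩ := Function.ne_iff.mp hp_ne
  exact hpw.tsum_pos (fun j => mul_nonneg (hp j) (hw j).le) i
    (mul_pos ((hp i).lt_of_ne' hi) (hw i))

theorem Summable.of_tsum_ne_zero {ι : Type*} {f : ι → ℝ} (h : ∑' i, f i ≠ 0) : Summable f := by
  by_contra hf
  exact h (tsum_eq_zero_of_not_summable hf)

theorem maxentropic_pmf_unique_general
    (Z : Type*)
    (w : Z → ℝ) (hw : ∀ z, 0 < w z)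
    (R : ℝ) (hR : 0 < R)
    (hq_summable : Summable fun z => Real.exp (-(w z) * R))
    (hq_sum_one : ∑' z, Real.exp (-(w z) * R) = 1)
    (p : Z → ℝ) (hp_nonneg : ∀ z, 0 ≤ p z)
    (hp_summable : Summable p)
    (hp_sum_one : ∑' z, p z = 1)
    (hEw_summable : Summable fun z => p z * w z)
    (h_entropy : (∑' z, -(p z * Real.log (p z))) = R * ∑' z, p z * w z) :
    ∀ z, p z = Real.exp (-(w z) * R) := by
  have hp_ne : p ≠ 0 := by
    rintro rfl
    simp at hp_sum_one
  have hEw_pos := tsum_mul_pos hp_nonneg hp_ne hw hEw_summable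
  -- a divergent series would have `tsum` equal to `0`, whereas `R · E_p[w] > 0`
  have hent : Summable fun z => -(p z * log (p z)) :=
    .of_tsum_ne_zero (h_entropy ▸ (mul_pos hR hEw_pos).ne')
  have hcross : ∀ z, p z * log (exp (-(w z) * R)) = -R * (p z * w z) := fun z => by
    rw [log_exp]; ring
  refine congrFun (eq_of_tsum_mul_log_eq hp_nonneg (fun z => exp_pos _) hp_summable
    hq_summable (hp_sum_one.trans hq_sum_one.symm) (by simpa using hent.neg) ?_ ?_)
  · simpa only [hcross] using hEw_summable.mul_left (-R)
  · rw [tsum_congr hcross, tsum_mul_left, neg_mul, ← h_entropy, tsum_neg, neg_neg]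

/-- **Lemma 1 (uniqueness).** Let `Z` be a countable set with positive weight
function `w`, and let `R > 0` satisfy `∑_{z ∈ Z} e^{-w z · R} = 1`. If `p` is
a probability mass function on `Z` with finite expected weight whose entropy
`H(p) = -∑ p z · ln (p z)` equals `R · E_p[w]`, then `p` is the exponential
distribution: `p z = e^{-w z · R}` for all `z`. -/
theorem maxentropic_pmf_unique
    (Z : Type*) [Countable Z]
    (w : Z → ℝ) (hw : ∀ z, 0 < w z)
    (R : ℝ) (hR : 0 < R)
    (hq_summable : Summable fun z => Real.exp (-(w z) * R))
    (hq_sum_one : ∑' z, Real.exp (-(w z) * R) = 1)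
    (p : Z → ℝ) (hp_nonneg : ∀ z, 0 ≤ p z)
    (hp_summable : Summable p)
    (hp_sum_one : ∑' z, p z = 1)
    (hEw_summable : Summable fun z => p z * w z)
    (h_entropy : (∑' z, -(p z * Real.log (p z))) = R * ∑' z, p z * w z) :
    ∀ z, p z = Real.exp (-(w z) * R) :=
  maxentropic_pmf_unique_general Z w hw R hR hq_summable hq_sum_one p hp_nonneg hp_summable
    hp_sum_one hEw_summable h_entropy
end

section
/- Let 𝒜 be a countable set with a weight function w : 𝒜 → ℝ_{>0}. Let (𝒳_l)_{l≥1} be a sequence of nonempty pairwise disjoint subsets of 𝒜, and for each l let p_l be a probability mass function supported on 𝒳_l with finite expected weight E_{p_l}[w] = Σ_{x∈𝒳_l} p_l(x)·w(x) < ∞. Suppose for each l there is R_l > 0 with Σ_{x∈𝒳_l} e^{-w(x)·R_l} = 1. Then limsup_{l→∞} H(p_l)/E_{p_l}[w] ≤ limsup_{l→∞} R_l, where H(p_l) = -Σ_{x∈𝒳_l} p_l(x) ln p_l(x). -/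
/-!
Gibbs' inequality against the distribution `q x = exp (-w x * R l)` on `𝒳 l`: pointwise
`-p ln p ≤ R l · p w + q - p` (multiply `u + 1 ≤ exp u` at `u = -w R l - ln p` by `p`), and summing
gives `H(p l) ≤ R l · E[w]`, so the inequality already holds termwise before the `limsup`.
The same pointwise bound shows that the entropy series converges, so its `tsum` is not a junk `0`.
-/

open Real Filter

lemma neg_mul_log_le_mul_add_exp_neg_sub {p : ℝ} (hp : 0 ≤ p) (t : ℝ) :
    -(p * log p) ≤ p * t + exp (-t) - p := by
  rcases hp.eq_or_lt with rfl | hp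
  · simp [(exp_pos _).le]
  · have h := mul_le_mul_of_nonneg_left (add_one_le_exp (-t - log p)) hp.le
    rw [exp_sub, exp_log hp, mul_div_cancel₀ _ hp.ne'] at h
    linarith

section

variable {ι : Type*} {p w : ι → ℝ}

lemma le_one_of_tsum_eq_one (hp_nonneg : ∀ x, 0 ≤ p x) (hp_summable : Summable p)
    (hp_sum_one : ∑' x, p x = 1) (x : ι) : p x ≤ 1 :=
  hp_sum_one ▸ hp_summable.le_tsum x fun y _ => hp_nonneg y

lemma tsum_mul_pos_of_tsum_eq_one (hp_nonneg : ∀ x, 0 ≤ p x) (hp_sum_one : ∑' x, p x = 1)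
    (hw : ∀ x, 0 < w x) (hpw : Summable fun x => p x * w x) :
    0 < ∑' x, p x * w x := by
  obtain ⟨x, hx⟩ : ∃ x, p x ≠ 0 := by
    by_contra! h
    simp [h] at hp_sum_one
  exact hpw.tsum_pos (fun y => mul_nonneg (hp_nonneg y) (hw y).le) x
    (mul_pos ((hp_nonneg x).lt_of_ne' hx) (hw x))

theorem tsum_neg_mul_log_le_mul_tsum_mul {s : Set ι} {r : ℝ}
    (hp_nonneg : ∀ x, 0 ≤ p x) (hp_supp : ∀ x, x ∉ s → p x = 0)
    (hp_summable : Summable p) (hp_sum_one : ∑' x, p x = 1)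
    (hpw : Summable fun x => p x * w x)
    (hq_summable : Summable fun x : s => exp (-(w x.1) * r))
    (hq_sum_one : ∑' x : s, exp (-(w x.1) * r) = 1) :
    ∑' x, -(p x * log (p x)) ≤ r * ∑' x, p x * w x := by
  set q := s.indicator fun x => exp (-(w x) * r)
  have hq : Summable q := summable_subtype_iff_indicator.mp hq_summable
  have hq_one : ∑' x, q x = 1 := by rw [← tsum_subtype, hq_sum_one]
  have h_gibbs : ∀ x, -(p x * log (p x)) ≤ r * (p x * w x) + q x - p x := by
    intro x
    by_cases hx : x ∈ s
    · simpa [q, hx, neg_mul, mul_comm, mul_left_comm]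
        using neg_mul_log_le_mul_add_exp_neg_sub (hp_nonneg x) (w x * r)
    · simp [q, hx, hp_supp x hx]
  have h_bound : Summable fun x => r * (p x * w x) + q x - p x :=
    ((hpw.mul_left r).add hq).sub hp_summable
  have h_entropy : Summable fun x => -(p x * log (p x)) :=
    h_bound.of_nonneg_of_le (fun x => by
      simpa [negMulLog] using negMulLog_nonneg (hp_nonneg x)
        (le_one_of_tsum_eq_one hp_nonneg hp_summable hp_sum_one x)) h_gibbs
  calc ∑' x, -(p x * log (p x))
      ≤ ∑' x, (r * (p x * w x) + q x - p x) := h_entropy.tsum_le_tsum h_gibbs h_bound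
    _ = r * ∑' x, p x * w x := by
      rw [((hpw.mul_left r).add hq).tsum_sub hp_summable, (hpw.mul_left r).tsum_add hq,
        tsum_mul_left, hq_one, hp_sum_one, add_sub_cancel_right]

end

theorem entropy_rate_le_rate_bound_general
    (A : Type*)
    (w : A → ℝ) (hw : ∀ a, 0 < w a)
    (𝒳 : ℕ → Set A)
    (p : ℕ → A → ℝ)
    (hp_nonneg : ∀ l x, 0 ≤ p l x)
    (hp_supp : ∀ l x, x ∉ 𝒳 l → p l x = 0)
    (hp_summable : ∀ l, Summable (p l))
    (hp_sum_one : ∀ l, ∑' x, p l x = 1)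
    (hEw_summable : ∀ l, Summable fun x => p l x * w x)
    (R : ℕ → ℝ)
    (hR_summable : ∀ l, Summable fun x : 𝒳 l => Real.exp (-(w x.1) * R l))
    (hR_sum_one : ∀ l, ∑' x : 𝒳 l, Real.exp (-(w x.1) * R l) = 1) :
    Filter.limsup
        (fun l : ℕ =>
          (((∑' x, -(p l x * Real.log (p l x))) / ∑' x, p l x * w x : ℝ) : EReal))
        Filter.atTop
      ≤ Filter.limsup (fun l : ℕ => ((R l : ℝ) : EReal)) Filter.atTop := by
  refine limsup_le_limsup (.of_forall fun l => ?_)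
  have hE_pos := tsum_mul_pos_of_tsum_eq_one (hp_nonneg l) (hp_sum_one l) hw (hEw_summable l)
  rw [EReal.coe_le_coe_iff, div_le_iff₀' hE_pos, mul_comm]
  exact tsum_neg_mul_log_le_mul_tsum_mul (hp_nonneg l) (hp_supp l) (hp_summable l)
    (hp_sum_one l) (hEw_summable l) (hR_summable l) (hR_sum_one l)

/-- **Lemma 2.** Let `(𝒜, w)` be a constrained system (a countable set with a
positive weight function) and let `(𝒳 l)` be a sequence of nonempty pairwise
disjoint subsets of `𝒜`. For each `l`, let `p l` be a probability mass
function supported on `𝒳 l` with finite expected weight, and let `R l > 0`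
solve `∑_{x ∈ 𝒳 l} e^{-w x · R l} = 1`. Then the entropy rate of the input
source is bounded by the rate bound:
`limsup_l H(p l) / E_{p l}[w] ≤ limsup_l R l`. -/
theorem entropy_rate_le_rate_bound
    (A : Type*) [Countable A]
    (w : A → ℝ) (hw : ∀ a, 0 < w a)
    (𝒳 : ℕ → Set A)
    (h_nonempty : ∀ l, (𝒳 l).Nonempty)
    (h_disjoint : ∀ l l', l ≠ l' → Disjoint (𝒳 l) (𝒳 l'))
    (p : ℕ → A → ℝ)
    (hp_nonneg : ∀ l x, 0 ≤ p l x)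
    (hp_supp : ∀ l x, x ∉ 𝒳 l → p l x = 0)
    (hp_summable : ∀ l, Summable (p l))
    (hp_sum_one : ∀ l, ∑' x, p l x = 1)
    (hEw_summable : ∀ l, Summable fun x => p l x * w x)
    (R : ℕ → ℝ) (hR_pos : ∀ l, 0 < R l)
    (hR_summable : ∀ l, Summable fun x : 𝒳 l => Real.exp (-(w x.1) * R l))
    (hR_sum_one : ∀ l, ∑' x : 𝒳 l, Real.exp (-(w x.1) * R l) = 1) :
    Filter.limsup
        (fun l : ℕ =>
          (((∑' x, -(p l x * Real.log (p l x))) / ∑' x, p l x * w x : ℝ) : EReal))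
        Filter.atTop
      ≤ Filter.limsup (fun l : ℕ => ((R l : ℝ) : EReal)) Filter.atTop :=
  entropy_rate_le_rate_bound_general A w hw 𝒳 p hp_nonneg hp_supp hp_summable hp_sum_one
    hEw_summable R hR_summable hR_sum_one
end

section
/- Let 𝒜 be a countable set with a weight function w : 𝒜 → ℝ_{>0}. Let (𝒳_l)_{l≥1} be a sequence of nonempty pairwise disjoint subsets of 𝒜, and suppose for each l there is R_l > 0 with Σ_{x∈𝒳_l} e^{-w(x)·R_l} = 1. Let Q = inf{σ ∈ ℝ : Σ_{a∈𝒜} e^{-w(a)σ} converges}. Then limsup_{l→∞} R_l ≤ Q. Equivalently, for every real σ < limsup_l R_l, the family (e^{-w(a)σ})_{a∈𝒜} is not summable. -/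
/-! For `σ` in the region of convergence, the pieces `𝒳 l` are disjoint, so the partial sums
`∑_{x ∈ 𝒳 l} e^{-w x σ}` are the terms of a convergent series and drop below `1` for large `l`.
Since `σ ↦ ∑_{x ∈ 𝒳 l} e^{-w x σ}` is antitone and equals `1` at `R l`, this forces `R l ≤ σ`
eventually. -/

open Filter Function Topology

theorem Summable.tendsto_cofinite_tsum_subtype_zero {α ι G : Type*} [AddCommGroup G]
    [UniformSpace G] [IsUniformAddGroup G] [CompleteSpace G] {f : α → G} (hf : Summable f)
    {s : ι → Set α} (hs : Pairwise (Disjoint on s)) :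
    Tendsto (fun i => ∑' x : s i, f x) cofinite (𝓝 0) := by
  have hinj : Injective fun p : Σ i, s i => (p.2 : α) :=
    Subtype.val_injective.comp (Set.sigmaToiUnion_injective s hs)
  exact (hf.comp_injective hinj).sigma.tendsto_cofinite_zero

theorem Real.tsum_exp_neg_mul_le_of_le {ι : Type*} {w : ι → ℝ} (hw : ∀ i, 0 ≤ w i) {σ R : ℝ}
    (hσR : σ ≤ R) (hσ : Summable fun i => Real.exp (-w i * σ)) :
    ∑' i, Real.exp (-w i * R) ≤ ∑' i, Real.exp (-w i * σ) := by
  have hle : ∀ i, Real.exp (-w i * R) ≤ Real.exp (-w i * σ) := fun i =>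
    Real.exp_le_exp.2 (by nlinarith [hw i])
  exact (hσ.of_nonneg_of_le (fun _ => (Real.exp_pos _).le) hle).tsum_mono hσ hle

theorem rate_bound_le_abscissa_of_convergence_general
    (A : Type*)
    (w : A → ℝ) (hw : ∀ a, 0 < w a)
    (𝒳 : ℕ → Set A)
    (h_disjoint : ∀ l l', l ≠ l' → Disjoint (𝒳 l) (𝒳 l'))
    (R : ℕ → ℝ)
    (hR_sum_one : ∀ l, ∑' x : 𝒳 l, Real.exp (-(w x.1) * R l) = 1) :
    Filter.limsup (fun l : ℕ => ((R l : ℝ) : EReal)) Filter.atTop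
      ≤ sInf ((fun σ : ℝ => (σ : EReal)) ''
          {σ : ℝ | Summable fun a : A => Real.exp (-(w a) * σ)}) := by
  refine le_sInf ?_
  rintro _ ⟨σ, hσ, rfl⟩
  have htend : Tendsto (fun l => ∑' x : 𝒳 l, Real.exp (-(w x.1) * σ)) atTop (𝓝 0) :=
    Nat.cofinite_eq_atTop ▸ Summable.tendsto_cofinite_tsum_subtype_zero hσ h_disjoint
  refine limsup_le_of_le (by isBoundedDefault) ?_
  filter_upwards [htend.eventually (gt_mem_nhds one_pos)] with l hl
  rw [EReal.coe_le_coe_iff]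
  by_contra! hσR
  have hle := Real.tsum_exp_neg_mul_le_of_le (fun x : 𝒳 l => (hw x).le) hσR.le
    (hσ.subtype (𝒳 l))
  linarith [hR_sum_one l]

/-- **Lemma 3.** Let `(𝒜, w)` be a constrained system (a countable set with a
positive weight function) and let `(𝒳 l)` be a sequence of nonempty pairwise
disjoint subsets of `𝒜`, with `R l > 0` solving
`∑_{x ∈ 𝒳 l} e^{-w x · R l} = 1` for each `l`. Then the rate bound
`limsup_l R l` is at most the abscissa of convergence
`Q = inf {σ : ∑_{a ∈ 𝒜} e^{-w a · σ} converges}` of the generating function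
(with `Q = ⊤` if the series converges for no real `σ`). -/
theorem rate_bound_le_abscissa_of_convergence
    (A : Type*) [Countable A]
    (w : A → ℝ) (hw : ∀ a, 0 < w a)
    (𝒳 : ℕ → Set A)
    (h_nonempty : ∀ l, (𝒳 l).Nonempty)
    (h_disjoint : ∀ l l', l ≠ l' → Disjoint (𝒳 l) (𝒳 l'))
    (R : ℕ → ℝ) (hR_pos : ∀ l, 0 < R l)
    (hR_summable : ∀ l, Summable fun x : 𝒳 l => Real.exp (-(w x.1) * R l))
    (hR_sum_one : ∀ l, ∑' x : 𝒳 l, Real.exp (-(w x.1) * R l) = 1) :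
    Filter.limsup (fun l : ℕ => ((R l : ℝ) : EReal)) Filter.atTop
      ≤ sInf ((fun σ : ℝ => (σ : EReal)) ''
          {σ : ℝ | Summable fun a : A => Real.exp (-(w a) * σ)}) :=
  rate_bound_le_abscissa_of_convergence_general A w hw 𝒳 h_disjoint R hR_sum_one
end

section
/- Let 𝒜 be a countable set with a weight function w : 𝒜 → ℝ_{>0}, and let Q = inf{σ ∈ ℝ : Σ_{a∈𝒜} e^{-w(a)σ} converges}. Let (𝒳_l)_{l≥1} be nonempty pairwise disjoint subsets of 𝒜 such that for each l there is R_l > 0 with Σ_{x∈𝒳_l} e^{-w(x)·R_l} = 1, and for each l let p_l be a probability mass function supported on 𝒳_l with finite expected weight. Then the entropy rate satisfies limsup_{l→∞} H(p_l)/E_{p_l}[w] ≤ Q, where H(p_l) = -Σ_{x∈𝒳_l} p_l(x) ln p_l(x) and E_{p_l}[w] = Σ_{x∈𝒳_l} p_l(x) w(x). -/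
/-!
Fix `σ` with `∑ₐ e^{-w a σ} < ∞`. Gibbs' inequality against the distribution
`x ↦ e^{-w x R_l}` on `𝒳 l` gives `H(p l) ≤ R l · E_{p l}[w]`. Since the `𝒳 l` are disjoint,
the partial sums `∑_{x ∈ 𝒳 l} e^{-w x σ}` are the terms of a convergent series, so they
eventually drop below `1 = ∑_{x ∈ 𝒳 l} e^{-w x R_l}`, which forces `R l < σ` because these
sums decrease in the exponent. Hence eventually `H(p l) / E_{p l}[w] ≤ R l < σ`.
-/

open Real Filter Topology

namespace ConstrainedSystem

variable {A : Type*}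

noncomputable def entropy (p : A → ℝ) : ℝ := ∑' x, -(p x * log (p x))

noncomputable def expectedWeight (p w : A → ℝ) : ℝ := ∑' x, p x * w x

lemma neg_mul_log_le_neg_mul_log_add_sub {p q : ℝ} (hp : 0 ≤ p) (hq : 0 < q) :
    -(p * log p) ≤ -(p * log q) + (q - p) := by
  rcases hp.eq_or_lt with rfl | hp
  · simpa using hq.le
  · have h := mul_le_mul_of_nonneg_left (log_le_sub_one_of_pos (div_pos hq hp)) hp.le
    rw [log_div hq.ne' hp.ne', mul_sub, mul_sub, mul_div_cancel₀ _ hp.ne', mul_one] at h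
    linarith

lemma entropy_le_mul_expectedWeight {w : A → ℝ} {X : Set A} {r : ℝ}
    (hq_summable : Summable fun x : X => exp (-(w x.1) * r))
    (hq_sum_one : ∑' x : X, exp (-(w x.1) * r) = 1)
    {p : A → ℝ} (hp_nonneg : ∀ x, 0 ≤ p x) (hp_supp : ∀ x, x ∉ X → p x = 0)
    (hp_summable : Summable p) (hp_sum_one : ∑' x, p x = 1)
    (hE_summable : Summable fun x => p x * w x) :
    entropy p ≤ r * expectedWeight p w := by
  set q : A → ℝ := X.indicator fun a => exp (-(w a) * r)
  have hq_summable' : Summable q := summable_subtype_iff_indicator.mp hq_summable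
  have hq_sum_one' : ∑' a, q a = 1 := by
    rw [← hq_sum_one, tsum_subtype X fun a => exp (-(w a) * r)]
  set g : A → ℝ := fun a => p a * w a * r + (q a - p a)
  have hg_summable : Summable g := (hE_summable.mul_right r).add (hq_summable'.sub hp_summable)
  have h_gibbs : ∀ a, -(p a * log (p a)) ≤ g a := by
    intro a
    by_cases ha : a ∈ X
    · have hqa : q a = exp (-(w a) * r) := Set.indicator_of_mem ha _
      have h := neg_mul_log_le_neg_mul_log_add_sub (hp_nonneg a) (hqa ▸ exp_pos _ : 0 < q a)
      rw [hqa, log_exp] at h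
      simp only [g, hqa]
      linarith
    · simp [g, q, hp_supp a ha, ha]
  have h_nonneg : ∀ a, 0 ≤ -(p a * log (p a)) := fun a => by
    have hpa_le_one : p a ≤ 1 := hp_sum_one ▸ hp_summable.le_tsum a fun b _ => hp_nonneg b
    simpa [negMulLog] using negMulLog_nonneg (hp_nonneg a) hpa_le_one
  calc entropy p ≤ ∑' a, g a :=
        (Summable.of_nonneg_of_le h_nonneg h_gibbs hg_summable).tsum_le_tsum h_gibbs hg_summable
    _ = expectedWeight p w * r + (∑' a, q a - ∑' a, p a) := by
        rw [Summable.tsum_add (hE_summable.mul_right r) (hq_summable'.sub hp_summable),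
          Summable.tsum_sub hq_summable' hp_summable, tsum_mul_right, expectedWeight]
    _ = r * expectedWeight p w := by rw [hq_sum_one', hp_sum_one]; ring

lemma expectedWeight_pos {p w : A → ℝ} (hw : ∀ a, 0 < w a) (hp_nonneg : ∀ x, 0 ≤ p x)
    (hp_sum_one : ∑' x, p x = 1) (hE_summable : Summable fun x => p x * w x) :
    0 < expectedWeight p w := by
  obtain ⟨x, hx⟩ : ∃ x, p x ≠ 0 := by
    by_contra! h
    simp [h] at hp_sum_one
  exact (mul_pos ((hp_nonneg x).lt_of_ne' hx) (hw x)).trans_le <|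
    hE_summable.le_tsum x fun y _ => mul_nonneg (hp_nonneg y) (hw y).le

lemma entropy_div_expectedWeight_le {w : A → ℝ} (hw : ∀ a, 0 < w a) {X : Set A} {r : ℝ}
    (hq_summable : Summable fun x : X => exp (-(w x.1) * r))
    (hq_sum_one : ∑' x : X, exp (-(w x.1) * r) = 1)
    {p : A → ℝ} (hp_nonneg : ∀ x, 0 ≤ p x) (hp_supp : ∀ x, x ∉ X → p x = 0)
    (hp_summable : Summable p) (hp_sum_one : ∑' x, p x = 1)
    (hE_summable : Summable fun x => p x * w x) :
    entropy p / expectedWeight p w ≤ r :=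
  (div_le_iff₀ (expectedWeight_pos hw hp_nonneg hp_sum_one hE_summable)).mpr <|
    entropy_le_mul_expectedWeight hq_summable hq_sum_one hp_nonneg hp_supp hp_summable
      hp_sum_one hE_summable

lemma tsum_exp_neg_mul_le_of_le {ι : Type*} {w : ι → ℝ} (hw : ∀ a, 0 ≤ w a) {σ r : ℝ}
    (hσr : σ ≤ r) (hσ : Summable fun a => exp (-(w a) * σ)) :
    ∑' a, exp (-(w a) * r) ≤ ∑' a, exp (-(w a) * σ) := by
  have h_le : ∀ a, exp (-(w a) * r) ≤ exp (-(w a) * σ) := fun a =>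
    exp_le_exp.mpr (by nlinarith [hw a])
  exact (hσ.of_nonneg_of_le (fun _ => (exp_pos _).le) h_le).tsum_le_tsum h_le hσ

lemma lt_of_tsum_exp_neg_mul_lt {ι : Type*} {w : ι → ℝ} (hw : ∀ a, 0 ≤ w a) {σ r : ℝ}
    (hσ : Summable fun a => exp (-(w a) * σ))
    (h : ∑' a, exp (-(w a) * σ) < ∑' a, exp (-(w a) * r)) : r < σ := by
  by_contra! hσr
  exact h.not_ge (tsum_exp_neg_mul_le_of_le hw hσr hσ)

lemma tendsto_tsum_subtype_zero_of_pairwise_disjoint {G : Type*} [NormedAddCommGroup G]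
    [CompleteSpace G] {f : A → G} (hf : Summable f) {s : ℕ → Set A}
    (hs : Pairwise (Function.onFun Disjoint s)) :
    Tendsto (fun l => ∑' x : s l, f x) atTop (𝓝 0) :=
  (hf.comp_injective (Subtype.val_injective.comp (Set.sigmaToiUnion_injective s hs))).sigma
    |>.tendsto_atTop_zero

end ConstrainedSystem

open ConstrainedSystem in
theorem entropy_rate_le_abscissa_of_convergence_general
    (A : Type*)
    (w : A → ℝ) (hw : ∀ a, 0 < w a)
    (𝒳 : ℕ → Set A)
    (h_disjoint : ∀ l l', l ≠ l' → Disjoint (𝒳 l) (𝒳 l'))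
    (R : ℕ → ℝ)
    (hR_summable : ∀ l, Summable fun x : 𝒳 l => Real.exp (-(w x.1) * R l))
    (hR_sum_one : ∀ l, ∑' x : 𝒳 l, Real.exp (-(w x.1) * R l) = 1)
    (p : ℕ → A → ℝ)
    (hp_nonneg : ∀ l x, 0 ≤ p l x)
    (hp_supp : ∀ l x, x ∉ 𝒳 l → p l x = 0)
    (hp_summable : ∀ l, Summable (p l))
    (hp_sum_one : ∀ l, ∑' x, p l x = 1)
    (hEw_summable : ∀ l, Summable fun x => p l x * w x) :
    Filter.limsup
        (fun l : ℕ =>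
          (((∑' x, -(p l x * Real.log (p l x))) / ∑' x, p l x * w x : ℝ) : EReal))
        Filter.atTop
      ≤ sInf ((fun σ : ℝ => (σ : EReal)) ''
          {σ : ℝ | Summable fun a : A => Real.exp (-(w a) * σ)}) := by
  refine le_sInf ?_
  rintro _ ⟨σ, hσ, rfl⟩
  have h_tail : ∀ᶠ l in atTop, ∑' x : 𝒳 l, exp (-(w x.1) * σ) < 1 :=
    (tendsto_tsum_subtype_zero_of_pairwise_disjoint hσ fun l l' => h_disjoint l l')
      |>.eventually_lt_const one_pos
  refine limsup_le_of_le (by isBoundedDefault) ?_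
  filter_upwards [h_tail] with l hl
  have hR_lt : R l < σ :=
    lt_of_tsum_exp_neg_mul_lt (w := fun x : 𝒳 l => w x) (fun x => (hw x).le) (hσ.subtype _)
      (by rwa [hR_sum_one])
  exact_mod_cast (entropy_div_expectedWeight_le hw (hR_summable l) (hR_sum_one l)
    (hp_nonneg l) (hp_supp l) (hp_summable l) (hp_sum_one l) (hEw_summable l)).trans hR_lt.le

/-- **Lemmas 1–3 combined.** The entropy rate of any input source of a
constrained system `(𝒜, w)` — given by nonempty pairwise disjoint supports
`𝒳 l ⊆ 𝒜` carrying probability mass functions `p l` with finite expected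
weight, where `R l > 0` solves `∑_{x ∈ 𝒳 l} e^{-w x · R l} = 1` — is
upper-bounded by the abscissa of convergence
`Q = inf {σ : ∑_{a ∈ 𝒜} e^{-w a · σ} converges}` of the generating function
(with `Q = ⊤` if the series converges for no real `σ`). -/
theorem entropy_rate_le_abscissa_of_convergence
    (A : Type*) [Countable A]
    (w : A → ℝ) (hw : ∀ a, 0 < w a)
    (𝒳 : ℕ → Set A)
    (h_nonempty : ∀ l, (𝒳 l).Nonempty)
    (h_disjoint : ∀ l l', l ≠ l' → Disjoint (𝒳 l) (𝒳 l'))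
    (R : ℕ → ℝ) (hR_pos : ∀ l, 0 < R l)
    (hR_summable : ∀ l, Summable fun x : 𝒳 l => Real.exp (-(w x.1) * R l))
    (hR_sum_one : ∀ l, ∑' x : 𝒳 l, Real.exp (-(w x.1) * R l) = 1)
    (p : ℕ → A → ℝ)
    (hp_nonneg : ∀ l x, 0 ≤ p l x)
    (hp_supp : ∀ l x, x ∉ 𝒳 l → p l x = 0)
    (hp_summable : ∀ l, Summable (p l))
    (hp_sum_one : ∀ l, ∑' x, p l x = 1)
    (hEw_summable : ∀ l, Summable fun x => p l x * w x) :
    Filter.limsup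
        (fun l : ℕ =>
          (((∑' x, -(p l x * Real.log (p l x))) / ∑' x, p l x * w x : ℝ) : EReal))
        Filter.atTop
      ≤ sInf ((fun σ : ℝ => (σ : EReal)) ''
          {σ : ℝ | Summable fun a : A => Real.exp (-(w a) * σ)}) :=
  entropy_rate_le_abscissa_of_convergence_general A w hw 𝒳 h_disjoint R hR_summable hR_sum_one p
    hp_nonneg hp_supp hp_summable hp_sum_one hEw_summable
end

section
/- Let Σ₀ be a countable alphabet with a letter-weight function w₀ : Σ₀ → ℝ_{>0}, extended additively to strings by w(y₁⋯y_m) = w₀(y₁) + ⋯ + w₀(y_m). Let 𝒜 be a set of nonempty strings over Σ₀ and Q = inf{σ ∈ ℝ : Σ_{a∈𝒜} e^{-w(a)σ} converges}. Let 𝒴 be a countable set of nonempty strings over Σ₀, and for each l ≥ 1 let p_l be a probability mass function on 𝒴^l (the distribution of the first l steps of an input process) with finite expected total weight. Suppose: (a) the concatenation map cat(y₁,…,y_l) = y₁y₂⋯y_l is injective on the support of p_l for each l; (b) the images under cat of the supports of the p_l are nonempty, pairwise disjoint across distinct l, and all contained in 𝒜; and (c) for each l there exists R_l > 0 with Σ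 e^{-w(x)R_l} = 1, summing over x in the image of the support of p_l under cat. Then limsup_{l→∞} H(p_l)/E_{p_l}[w(Y₁)+⋯+w(Y_l)] ≤ Q, where H(p_l) is the entropy (in nats) of p_l. -/
/-!
Gibbs' inequality against the reference weights `e^{-w(cat y) R_l}`, which form a
sub-probability on the support of `p_l` because concatenation is injective there, gives
`H(p_l) ≤ R_l · E[w(Y₁) + ⋯ + w(Y_l)]`. For `σ` in the region of convergence of
`∑_{a ∈ 𝒜} e^{-w(a) σ}`, the images of the supports are disjoint subsets of `𝒜`, so their
partial sums of `e^{-w σ}` tend to `0`; as such a partial sum is at least `1` whenever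
`R_l > σ`, eventually `R_l ≤ σ`.
-/

open Filter Function Real Set

section Gibbs

variable {T : Type*} {p q W : T → ℝ} {r : ℝ}

lemma neg_mul_log_le_neg_mul_log_add_sub {x y : ℝ} (hx : 0 ≤ x) (hy : 0 ≤ y)
    (hxy : x ≠ 0 → 0 < y) : -(x * log x) ≤ -(x * log y) + (y - x) := by
  rcases hx.eq_or_lt with rfl | hx
  · simpa using hy
  have hy := hxy hx.ne'
  have hlog : log (y / x) ≤ y / x - 1 := log_le_sub_one_of_pos (div_pos hy hx)
  rw [log_div hy.ne' hx.ne'] at hlog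
  have := mul_le_mul_of_nonneg_left hlog hx.le
  rw [mul_sub, mul_sub, mul_div_cancel₀ _ hx.ne', mul_one] at this
  linarith

theorem tsum_neg_mul_log_le_tsum_neg_mul_log (hp0 : ∀ y, 0 ≤ p y) (hp : HasSum p 1)
    (hq0 : ∀ y, 0 ≤ q y) (hq : Summable q) (hq1 : ∑' y, q y ≤ 1)
    (hpq_pos : ∀ y, p y ≠ 0 → 0 < q y) (hpq : Summable fun y => p y * log (q y)) :
    ∑' y, -(p y * log (p y)) ≤ ∑' y, -(p y * log (q y)) := by
  have hp1 (y : T) : p y ≤ 1 := hp.tsum_eq ▸ hp.summable.le_tsum y fun z _ => hp0 z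
  have hbound (y : T) := neg_mul_log_le_neg_mul_log_add_sub (hp0 y) (hq0 y) (hpq_pos y)
  have hg : Summable fun y => -(p y * log (q y)) + (q y - p y) :=
    hpq.neg.add (hq.sub hp.summable)
  have hH : Summable fun y => -(p y * log (p y)) :=
    hg.of_nonneg_of_le (fun y => neg_nonneg.2 (mul_log_nonpos (hp0 y) (hp1 y))) hbound
  calc ∑' y, -(p y * log (p y))
      ≤ ∑' y, (-(p y * log (q y)) + (q y - p y)) := hH.tsum_le_tsum hbound hg
    _ = ∑' y, -(p y * log (q y)) + (∑' y, q y - 1) := by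
      rw [hpq.neg.tsum_add (hq.sub hp.summable), hq.tsum_sub hp.summable, hp.tsum_eq]
    _ ≤ ∑' y, -(p y * log (q y)) := by linarith

theorem tsum_neg_mul_log_le_mul_tsum (hp0 : ∀ y, 0 ≤ p y) (hp : HasSum p 1)
    (hpW : Summable fun y => p y * W y)
    (hZ : Summable fun y : support p => exp (-W y * r))
    (hZ1 : ∑' y : support p, exp (-W y * r) ≤ 1) :
    ∑' y, -(p y * log (p y)) ≤ r * ∑' y, p y * W y := by
  set q := (support p).indicator fun y => exp (-W y * r)
  have hpq (y : T) : p y * log (q y) = -(r * (p y * W y)) := by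
    by_cases hy : p y = 0
    · simp [hy]
    · simp only [q, indicator_of_mem (show y ∈ support p from hy), log_exp]
      ring
  calc ∑' y, -(p y * log (p y))
      ≤ ∑' y, -(p y * log (q y)) := by
        refine tsum_neg_mul_log_le_tsum_neg_mul_log hp0 hp
          (indicator_nonneg fun _ _ => (exp_pos _).le) (summable_subtype_iff_indicator.1 hZ)
          (by rwa [← tsum_subtype]) (fun y hy => ?_) ?_
        · simp only [q, indicator_of_mem (show y ∈ support p from hy), exp_pos]
        · simpa only [hpq] using (hpW.mul_left r).neg
    _ = r * ∑' y, p y * W y := by simp only [hpq, neg_neg, tsum_mul_left]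

theorem tsum_neg_mul_log_div_le (hW : ∀ y, 0 ≤ W y) (hr : 0 ≤ r)
    (hp0 : ∀ y, 0 ≤ p y) (hp : HasSum p 1) (hpW : Summable fun y => p y * W y)
    (hZ : Summable fun y : support p => exp (-W y * r))
    (hZ1 : ∑' y : support p, exp (-W y * r) ≤ 1) :
    (∑' y, -(p y * log (p y))) / ∑' y, p y * W y ≤ r :=
  div_le_of_le_mul₀ (tsum_nonneg fun y => mul_nonneg (hp0 y) (hW y)) hr
    (tsum_neg_mul_log_le_mul_tsum hp0 hp hpW hZ hZ1)

end Gibbs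

theorem summable_sigma_of_pairwise_disjoint {ι β E : Type*} [NormedAddCommGroup E]
    [CompleteSpace E] {A : Set β} {s : ι → Set β} {f : β → E} (hsub : ∀ i, s i ⊆ A)
    (hdisj : Pairwise (Disjoint on s)) (hf : Summable fun a : A => f a) :
    Summable fun x : Σ i, s i => f x.2 :=
  hf.comp_injective (i := fun x : Σ i, s i => (⟨x.2, hsub x.1 x.2.2⟩ : A)) <| by
    rintro ⟨i, x, hx⟩ ⟨j, y, hy⟩ h
    obtain rfl : x = y := congrArg Subtype.val h
    obtain rfl : i = j := hdisj.eq (not_disjoint_iff.2 ⟨x, hx, hy⟩)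
    rfl

theorem eventually_le_of_summable_exp {ι β : Type*} {A : Set β} {s : ι → Set β}
    {wt : β → ℝ} {R : ι → ℝ} {σ : ℝ} (hwt : ∀ x, 0 ≤ wt x) (hsub : ∀ i, s i ⊆ A)
    (hdisj : Pairwise (Disjoint on s)) (hR : ∀ i, HasSum (fun x : s i => exp (-wt x * R i)) 1)
    (hσ : Summable fun a : A => exp (-wt a * σ)) : ∀ᶠ i in cofinite, R i ≤ σ := by
  have hsig := summable_sigma_of_pairwise_disjoint (f := fun x => exp (-wt x * σ)) hsub hdisj hσ
  filter_upwards [hsig.sigma.tendsto_cofinite_zero.eventually (gt_mem_nhds one_pos)] with i hi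
  by_contra! hlt
  have : ∑' x : s i, exp (-wt x * R i) ≤ ∑' x : s i, exp (-wt x * σ) :=
    (hR i).summable.tsum_le_tsum (fun x => exp_le_exp.2 (by nlinarith [hwt x]))
      (hsig.sigma_factor i)
  linarith [(hR i).tsum_eq]

theorem input_process_entropy_rate_le_abscissa_general
    (α : Type*)
    (w₀ : α → ℝ) (hw₀ : ∀ c, 0 < w₀ c)
    (w : List α → ℝ) (hw : ∀ s : List α, w s = (s.map w₀).sum)
    (𝒜 : Set (List α))
    (p : (l : ℕ) → (Fin (l + 1) → List α) → ℝ)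
    (hp_nonneg : ∀ l y, 0 ≤ p l y)
    (hp_summable : ∀ l, Summable (p l))
    (hp_sum_one : ∀ l, ∑' y, p l y = 1)
    (hEw_summable : ∀ l, Summable fun y : Fin (l + 1) → List α =>
      p l y * ∑ i, w (y i))
    -- (a) concatenation is injective on the support of `p l`
    (h_inj : ∀ l, ∀ y y' : Fin (l + 1) → List α, p l y ≠ 0 → p l y' ≠ 0 →
      (List.ofFn y).flatten = (List.ofFn y').flatten → y = y')
    -- (b) images of the supports under concatenation: nonempty, pairwise
    -- disjoint, contained in `𝒜`
    (h_img_disjoint : ∀ l l', l ≠ l' →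
      Disjoint
        ((fun y : Fin (l + 1) → List α => (List.ofFn y).flatten) ''
          {y | p l y ≠ 0})
        ((fun y : Fin (l' + 1) → List α => (List.ofFn y).flatten) ''
          {y | p l' y ≠ 0}))
    (h_img_sub : ∀ l,
      ((fun y : Fin (l + 1) → List α => (List.ofFn y).flatten) ''
        {y | p l y ≠ 0}) ⊆ 𝒜)
    -- (c) the rate bounds `R l`
    (R : ℕ → ℝ) (hR_pos : ∀ l, 0 < R l)
    (hR_summable : ∀ l, Summable fun x :
        ((fun y : Fin (l + 1) → List α => (List.ofFn y).flatten) ''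
          {y | p l y ≠ 0}) =>
      Real.exp (-(w x.1) * R l))
    (hR_sum_one : ∀ l, (∑' x :
        ((fun y : Fin (l + 1) → List α => (List.ofFn y).flatten) ''
          {y | p l y ≠ 0}),
      Real.exp (-(w x.1) * R l)) = 1) :
    Filter.limsup
        (fun l : ℕ =>
          (((∑' y, -(p l y * Real.log (p l y))) /
              ∑' y : Fin (l + 1) → List α, p l y * ∑ i, w (y i) : ℝ) : EReal))
        Filter.atTop
      ≤ sInf ((fun σ : ℝ => (σ : EReal)) ''
          {σ : ℝ | Summable fun a : 𝒜 => Real.exp (-(w a.1) * σ)}) := by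
  have hw_nonneg (s : List α) : 0 ≤ w s :=
    (hw s).symm ▸ List.sum_nonneg (by simpa using fun c _ => (hw₀ c).le)
  have hw_flatten (l : ℕ) (y : Fin (l + 1) → List α) :
      w (List.ofFn y).flatten = ∑ i, w (y i) := by
    simp only [hw, List.map_flatten, List.sum_flatten, List.map_ofFn, List.sum_ofFn, comp_def]
  have hR_hasSum (l : ℕ) := (hR_summable l).hasSum_iff.2 (hR_sum_one l)
  have hrate (l : ℕ) : (∑' y, -(p l y * log (p l y))) /
      ∑' y : Fin (l + 1) → List α, p l y * ∑ i, w (y i) ≤ R l := by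
    have hinj : InjOn (fun y : Fin (l + 1) → List α => (List.ofFn y).flatten) (support (p l)) :=
      fun y hy y' hy' => h_inj l y y' hy hy'
    have hZ : HasSum (fun y : support (p l) => exp (-w (List.ofFn y.1).flatten * R l)) 1 :=
      (Equiv.Set.imageOfInjOn _ _ hinj).hasSum_iff.2 (hR_hasSum l)
    simp only [hw_flatten] at hZ
    exact tsum_neg_mul_log_div_le (fun y => Finset.sum_nonneg fun i _ => hw_nonneg _)
      (hR_pos l).le (hp_nonneg l) ((hp_summable l).hasSum_iff.2 (hp_sum_one l))
      (hEw_summable l) hZ.summable hZ.tsum_eq.le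
  refine le_sInf ?_
  rintro _ ⟨σ, hσ, rfl⟩
  have hev : ∀ᶠ l in atTop, R l ≤ σ := Nat.cofinite_eq_atTop ▸
    eventually_le_of_summable_exp hw_nonneg h_img_sub h_img_disjoint hR_hasSum hσ
  refine limsup_le_of_le (by isBoundedDefault) ?_
  filter_upwards [hev] with l hl
  exact EReal.coe_le_coe_iff.2 ((hrate l).trans hl)

/-- **Theorem 2.** Strings over a countable alphabet `α` are modelled as lists,
with weight `w s = ∑_{c ∈ s} w₀ c` extended additively from a positive letter
weight `w₀`. Let `𝒜` be a set of nonempty strings with abscissa of convergence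
`Q = inf {σ : ∑_{a ∈ 𝒜} e^{-w a · σ} converges}` (a value in `EReal`, `⊤` if
the series never converges), and let `𝒴` be a set of nonempty strings. For
each `l ≥ 1` let `p l` be a probability mass function on `𝒴^l` (tuples
`Fin (l+1) → List α`, representing the first `l+1` steps of an input process)
with finite expected total weight. Suppose (a) concatenation is injective on
the support of each `p l`; (b) the images of the supports under concatenation
are nonempty, pairwise disjoint, and contained in `𝒜`; and (c) for each `l`
there is `R l > 0` with `∑ e^{-w x · R l} = 1` over the image of the support.
Then the entropy rate of the process,
`limsup_l H(p l) / E_{p l}[w(Y₁) + ⋯ + w(Y_l)]`, is at most `Q`. -/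
theorem input_process_entropy_rate_le_abscissa
    (α : Type*) [Countable α]
    (w₀ : α → ℝ) (hw₀ : ∀ c, 0 < w₀ c)
    (w : List α → ℝ) (hw : ∀ s : List α, w s = (s.map w₀).sum)
    (𝒜 : Set (List α)) (h𝒜 : ∀ a ∈ 𝒜, a ≠ [])
    (𝒴 : Set (List α)) (h𝒴 : ∀ y ∈ 𝒴, y ≠ [])
    (p : (l : ℕ) → (Fin (l + 1) → List α) → ℝ)
    (hp_nonneg : ∀ l y, 0 ≤ p l y)
    (hp_supp : ∀ l y, p l y ≠ 0 → ∀ i, y i ∈ 𝒴)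
    (hp_summable : ∀ l, Summable (p l))
    (hp_sum_one : ∀ l, ∑' y, p l y = 1)
    (hEw_summable : ∀ l, Summable fun y : Fin (l + 1) → List α =>
      p l y * ∑ i, w (y i))
    -- (a) concatenation is injective on the support of `p l`
    (h_inj : ∀ l, ∀ y y' : Fin (l + 1) → List α, p l y ≠ 0 → p l y' ≠ 0 →
      (List.ofFn y).flatten = (List.ofFn y').flatten → y = y')
    -- (b) images of the supports under concatenation: nonempty, pairwise
    -- disjoint, contained in `𝒜`
    (h_img_nonempty : ∀ l,
      ((fun y : Fin (l + 1) → List α => (List.ofFn y).flatten) ''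
        {y | p l y ≠ 0}).Nonempty)
    (h_img_disjoint : ∀ l l', l ≠ l' →
      Disjoint
        ((fun y : Fin (l + 1) → List α => (List.ofFn y).flatten) ''
          {y | p l y ≠ 0})
        ((fun y : Fin (l' + 1) → List α => (List.ofFn y).flatten) ''
          {y | p l' y ≠ 0}))
    (h_img_sub : ∀ l,
      ((fun y : Fin (l + 1) → List α => (List.ofFn y).flatten) ''
        {y | p l y ≠ 0}) ⊆ 𝒜)
    -- (c) the rate bounds `R l`
    (R : ℕ → ℝ) (hR_pos : ∀ l, 0 < R l)
    (hR_summable : ∀ l, Summable fun x :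
        ((fun y : Fin (l + 1) → List α => (List.ofFn y).flatten) ''
          {y | p l y ≠ 0}) =>
      Real.exp (-(w x.1) * R l))
    (hR_sum_one : ∀ l, (∑' x :
        ((fun y : Fin (l + 1) → List α => (List.ofFn y).flatten) ''
          {y | p l y ≠ 0}),
      Real.exp (-(w x.1) * R l)) = 1) :
    Filter.limsup
        (fun l : ℕ =>
          (((∑' y, -(p l y * Real.log (p l y))) /
              ∑' y : Fin (l + 1) → List α, p l y * ∑ i, w (y i) : ℝ) : EReal))
        Filter.atTop
      ≤ sInf ((fun σ : ℝ => (σ : EReal)) ''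
          {σ : ℝ | Summable fun a : 𝒜 => Real.exp (-(w a.1) * σ)}) :=
  input_process_entropy_rate_le_abscissa_general α w₀ hw₀ w hw 𝒜 p hp_nonneg hp_summable hp_sum_one
    hEw_summable h_inj h_img_disjoint h_img_sub R hR_pos hR_summable hR_sum_one
end

section
/- Fix integers j, k ≥ 1 with j·k > 1. For n ≥ 1 let N(n) be the number of binary strings of length n containing no run of more than j consecutive 1s and no run of more than k consecutive 0s. Then limsup_{n→∞} (ln N(n))/n = s*, where s* is the unique positive real solution of (Σ_{a=1}^{j} e^{-a·s})·(Σ_{b=1}^{k} e^{-b·s}) = 1. -/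
/-!
Cutting a run-bounded binary string after its first run shows that the number `b_c(n)` of such
strings of length `n` that are empty or begin with `c` satisfies
`b_c(n) = ∑_{1 ≤ a ≤ min(m_c, n)} b_{¬c}(n - a)`, where `m_1 = j`, `m_0 = k`.
Put `x = e^{-s}` and `W_c = ∑_{a=1}^{m_c} x^a`, so that `W_1 W_0 = 1`. Then `max 1 W_c` is a
supersolution and `x^{j+k} · min 1 W_c` a subsolution of the weighted recurrence for `b_c(n) x^n`,
so by strong induction `N(n) e^{-sn}` stays between two positive constants. Hence
`log N(n) / n → s`, and the limsup is this limit.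
-/

open List Filter Topology Real

namespace List

variable {α : Type*}

theorem exists_eq_replicate_append (c : α) :
    ∀ s : List α, ∃ a r, s = replicate a c ++ r ∧ r.head? ≠ some c
  | [] => ⟨0, [], rfl, by simp⟩
  | x :: t => by
    by_cases hx : x = c
    · obtain ⟨a, r, rfl, hr⟩ := exists_eq_replicate_append c t
      exact ⟨a + 1, r, by simp [hx, replicate_succ], hr⟩
    · exact ⟨0, x :: t, rfl, by simpa using hx⟩

theorem replicate_append_inj {c : α} {a b : ℕ} {r r' : List α}
    (hr : r.head? ≠ some c) (hr' : r'.head? ≠ some c)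
    (h : replicate a c ++ r = replicate b c ++ r') : a = b ∧ r = r' := by
  induction a generalizing b with
  | zero =>
    cases b with
    | zero => simpa using h
    | succ b =>
      rw [replicate_zero, nil_append] at h
      simp [h, replicate_succ] at hr
  | succ a ih =>
    cases b with
    | zero =>
      rw [replicate_zero, nil_append] at h
      simp [← h, replicate_succ] at hr'
    | succ b =>
      simp only [replicate_succ, cons_append, cons.injEq, true_and] at h
      simpa using ih h

theorem replicate_infix_replicate_append {c d : α} {n a : ℕ} {r : List α}
    (hr : r.head? ≠ some c) (h : replicate n d <:+: replicate a c ++ r) :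
    (d = c ∧ n ≤ a) ∨ replicate n d <:+: r := by
  rcases infix_append_iff.mp h with h | h | ⟨l₁, l₂, hl, h₁, h₂⟩
  · rw [infix_replicate_iff, length_replicate] at h
    rcases n with _ | n
    · simp
    · exact Or.inl ⟨by simpa [replicate_succ] using congrArg head? h.2, h.1⟩
  · exact Or.inr h
  · rcases l₁ with _ | ⟨x, t⟩
    · exact Or.inr (by simpa [hl] using h₂.isInfix)
    have hx : x ∈ replicate n d := by simp [hl]
    obtain rfl : d = c := (eq_of_mem_replicate hx).symm.trans
      (eq_of_mem_replicate (h₁.subset mem_cons_self))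
    rcases l₂ with _ | ⟨y, u⟩
    · have hn : n = t.length + 1 := by simpa using congrArg length hl
      exact Or.inl ⟨rfl, by simpa [hn] using h₁.length_le⟩
    · have hy : y ∈ replicate n d := by simp [hl]
      obtain ⟨w, rfl⟩ := h₂
      simp [eq_of_mem_replicate hy] at hr

end List

def RunBounded (m : Bool → ℕ) (s : List Bool) : Prop :=
  ∀ c, ¬ replicate (m c + 1) c <:+: s

/-- Admitting the empty string makes the first-run recurrence `ncard_boundedFrom_eq_sum` uniform:
the tail left after the first run may be empty. -/
def boundedFrom (m : Bool → ℕ) (c : Bool) (n : ℕ) : Set (List Bool) :=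
  {s | s.length = n ∧ RunBounded m s ∧ s.head? ≠ some (!c)}

section Counting

variable {m : Bool → ℕ}

theorem runBounded_nil : RunBounded m [] :=
  fun c h => by simpa [replicate_succ] using eq_nil_of_infix_nil h

theorem runBounded_replicate_append_iff {c : Bool} {a : ℕ} {r : List Bool}
    (hr : r.head? ≠ some c) :
    RunBounded m (replicate a c ++ r) ↔ a ≤ m c ∧ RunBounded m r := by
  refine ⟨fun h => ⟨?_, fun d hd => h d (hd.trans infix_append_right)⟩, ?_⟩
  · by_contra! ha
    exact h c ((infix_replicate_iff.mpr ⟨by simpa using ha, by simp⟩).trans infix_append_left)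
  · rintro ⟨ha, hr'⟩ d hd
    rcases replicate_infix_replicate_append hr hd with ⟨rfl, hle⟩ | hd
    · omega
    · exact hr' d hd

theorem boundedFrom_finite (c : Bool) (n : ℕ) : (boundedFrom m c n).Finite :=
  (List.finite_length_eq Bool n).subset fun _ hs => hs.1

theorem boundedFrom_zero (c : Bool) : boundedFrom m c 0 = {[]} := by
  ext s
  simp only [boundedFrom, Set.mem_ofPred_eq, Set.mem_singleton_iff, length_eq_zero_iff]
  refine ⟨fun h => h.1, ?_⟩
  rintro rfl
  exact ⟨rfl, runBounded_nil, by simp⟩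

theorem one_le_ncard_boundedFrom {c : Bool} {n : ℕ} (hn : n ≤ m c) :
    1 ≤ (boundedFrom m c n).ncard := by
  refine (Set.ncard_pos (boundedFrom_finite c n)).mpr ⟨replicate n c, length_replicate, ?_, ?_⟩
  · simpa using (runBounded_replicate_append_iff (r := []) (by simp)).mpr ⟨hn, runBounded_nil⟩
  · cases n <;> simp [replicate_succ]

theorem replicate_append_mem_boundedFrom {c : Bool} {n a : ℕ} {r : List Bool}
    (ha : a ∈ Finset.Icc 1 (min (m c) n)) (hr : r ∈ boundedFrom m (!c) (n - a)) :
    replicate a c ++ r ∈ boundedFrom m c n := by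
  obtain ⟨hlen, hbdd, hhead⟩ := hr
  rw [Bool.not_not] at hhead
  simp only [Finset.mem_Icc, le_min_iff] at ha
  refine ⟨by simp only [length_append, length_replicate, hlen]; omega,
    (runBounded_replicate_append_iff hhead).mpr ⟨ha.2.1, hbdd⟩, ?_⟩
  obtain ⟨a, rfl⟩ := Nat.exists_eq_add_of_lt ha.1
  simp [replicate_succ]

theorem ncard_boundedFrom_eq_sum (c : Bool) {n : ℕ} (hn : 0 < n) :
    (boundedFrom m c n).ncard =
      ∑ a ∈ Finset.Icc 1 (min (m c) n), (boundedFrom m (!c) (n - a)).ncard := by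
  let f : (Σ a : Finset.Icc 1 (min (m c) n), boundedFrom m (!c) (n - a)) → boundedFrom m c n :=
    fun ⟨a, r⟩ => ⟨replicate a c ++ r, replicate_append_mem_boundedFrom a.2 r.2⟩
  have hf : Function.Bijective f := by
    constructor
    · rintro ⟨a, r, hr⟩ ⟨b, r', hr'⟩ h
      obtain ⟨hab, hrr'⟩ := replicate_append_inj (by simpa using hr.2.2) (by simpa using hr'.2.2)
        (congrArg Subtype.val h)
      exact Sigma.subtype_ext (Subtype.ext hab) hrr'
    · rintro ⟨s, hlen, hbdd, hhead⟩
      obtain ⟨a, r, rfl, hr⟩ := exists_eq_replicate_append c s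
      obtain ⟨ha, hbddr⟩ := (runBounded_replicate_append_iff hr).mp hbdd
      have ha₀ : a ≠ 0 := by
        rintro rfl
        rcases r with _ | ⟨x, r⟩
        · simp only [replicate_zero, append_nil, length_nil] at hlen; omega
        · cases x <;> cases c <;> simp_all
      simp only [length_append, length_replicate] at hlen
      have ha' : a ∈ Finset.Icc 1 (min (m c) n) := by
        simp only [Finset.mem_Icc, le_inf_iff]; omega
      refine ⟨⟨⟨a, ha'⟩, ⟨r, show r.length = n - a by omega, hbddr, ?_⟩⟩, rfl⟩
      simpa using hr
  have (a : Finset.Icc 1 (min (m c) n)) : Finite (boundedFrom m (!c) (n - a)) :=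
    (boundedFrom_finite _ _).to_subtype
  rw [← Nat.card_coe_set_eq, ← Nat.card_congr (Equiv.ofBijective f hf), Nat.card_sigma]
  exact Finset.sum_coe_sort _ fun a => (boundedFrom m (!c) (n - a)).ncard

end Counting

def runWeight (m : Bool → ℕ) (x : ℝ) (c : Bool) : ℝ :=
  ∑ a ∈ Finset.Icc 1 (m c), x ^ a

section Weights

variable {m : Bool → ℕ} {x : ℝ}

theorem runWeight_nonneg (hx : 0 ≤ x) (c : Bool) : 0 ≤ runWeight m x c :=
  Finset.sum_nonneg fun _ _ => pow_nonneg hx _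

theorem runWeight_mul_runWeight_not (c : Bool) :
    runWeight m x c * runWeight m x (!c) = runWeight m x true * runWeight m x false := by
  cases c
  · exact mul_comm _ _
  · rfl

theorem ncard_boundedFrom_mul_pow_eq_sum (c : Bool) {n : ℕ} (hn : 0 < n) :
    (boundedFrom m c n).ncard * x ^ n = ∑ a ∈ Finset.Icc 1 (min (m c) n),
      x ^ a * ((boundedFrom m (!c) (n - a)).ncard * x ^ (n - a)) := by
  rw [ncard_boundedFrom_eq_sum c hn, Nat.cast_sum, Finset.sum_mul]
  refine Finset.sum_congr rfl fun a ha => ?_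
  have han : a ≤ n := (Finset.mem_Icc.mp ha).2.trans (min_le_right _ _)
  rw [mul_left_comm, ← pow_add, Nat.add_sub_cancel' han]

theorem ncard_boundedFrom_mul_pow_le (hx : 0 ≤ x)
    (hW : runWeight m x true * runWeight m x false ≤ 1) (c : Bool) (n : ℕ) :
    (boundedFrom m c n).ncard * x ^ n ≤ max 1 (runWeight m x c) := by
  induction n using Nat.strong_induction_on generalizing c with
  | _ n ih =>
  rcases Nat.eq_zero_or_pos n with rfl | hn
  · simp [boundedFrom_zero]
  have hW' := (runWeight_mul_runWeight_not c).trans_le hW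
  calc (boundedFrom m c n).ncard * x ^ n
      = ∑ a ∈ Finset.Icc 1 (min (m c) n),
          x ^ a * ((boundedFrom m (!c) (n - a)).ncard * x ^ (n - a)) :=
        ncard_boundedFrom_mul_pow_eq_sum c hn
    _ ≤ ∑ a ∈ Finset.Icc 1 (min (m c) n), x ^ a * max 1 (runWeight m x (!c)) := by
        gcongr with a ha
        exact ih _ (by simp only [Finset.mem_Icc, le_inf_iff] at ha; omega) _
    _ ≤ ∑ a ∈ Finset.Icc 1 (m c), x ^ a * max 1 (runWeight m x (!c)) :=
        Finset.sum_le_sum_of_subset_of_nonneg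
          (Finset.Icc_subset_Icc le_rfl (min_le_left _ _)) fun _ _ _ => by positivity
    _ = max (runWeight m x c) (runWeight m x c * runWeight m x (!c)) := by
        rw [← Finset.sum_mul]
        change runWeight m x c * _ = _
        rw [mul_max_of_nonneg _ _ (runWeight_nonneg hx c), mul_one]
    _ ≤ max 1 (runWeight m x c) := max_le (le_max_right _ _) (hW'.trans (le_max_left _ _))

theorem le_ncard_boundedFrom_mul_pow (hx₀ : 0 < x) (hx₁ : x ≤ 1)
    (hW : 1 ≤ runWeight m x true * runWeight m x false) (c : Bool) (n : ℕ) :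
    x ^ (m true + m false) * min 1 (runWeight m x c) ≤ (boundedFrom m c n).ncard * x ^ n := by
  induction n using Nat.strong_induction_on generalizing c with
  | _ n ih =>
  have hW' := hW.trans_eq (runWeight_mul_runWeight_not c).symm
  set ε := x ^ (m true + m false)
  rcases le_or_gt n (m c) with hn | hn
  · calc ε * min 1 (runWeight m x c)
        ≤ ε := mul_le_of_le_one_right (by positivity) (min_le_left _ _)
      _ ≤ x ^ n := pow_le_pow_of_le_one hx₀.le hx₁ (by cases c <;> omega)
      _ ≤ _ := le_mul_of_one_le_left (by positivity)
          (by exact_mod_cast one_le_ncard_boundedFrom hn)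
  · calc ε * min 1 (runWeight m x c)
        ≤ ε * min (runWeight m x c) (runWeight m x c * runWeight m x (!c)) := by
          refine mul_le_mul_of_nonneg_left ?_ (by positivity)
          exact le_min (min_le_right _ _) ((min_le_left _ _).trans hW')
      _ = ∑ a ∈ Finset.Icc 1 (m c), x ^ a * (ε * min 1 (runWeight m x (!c))) := by
          rw [← Finset.sum_mul]
          change _ = runWeight m x c * _
          rw [mul_left_comm, mul_min_of_nonneg _ _ (runWeight_nonneg hx₀.le c), mul_one]
      _ ≤ ∑ a ∈ Finset.Icc 1 (m c),
            x ^ a * ((boundedFrom m (!c) (n - a)).ncard * x ^ (n - a)) := by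
          refine Finset.sum_le_sum fun a ha => mul_le_mul_of_nonneg_left ?_ (by positivity)
          exact ih _ (by simp only [Finset.mem_Icc] at ha; omega) _
      _ = _ := by rw [ncard_boundedFrom_mul_pow_eq_sum c (by omega), min_eq_left hn.le]

end Weights

theorem exists_ncard_runBounded_mul_pow_bounds {m : Bool → ℕ} {x : ℝ} (hx₀ : 0 < x)
    (hx₁ : x ≤ 1) (hW : runWeight m x true * runWeight m x false = 1) :
    ∃ c₁ c₂ : ℝ, 0 < c₁ ∧ ∀ n,
      c₁ ≤ {s : List Bool | s.length = n ∧ RunBounded m s}.ncard * x ^ n ∧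
      {s : List Bool | s.length = n ∧ RunBounded m s}.ncard * x ^ n ≤ c₂ := by
  have hWpos : 0 < runWeight m x true :=
    (runWeight_nonneg hx₀.le true).lt_of_ne fun h => by simp [← h] at hW
  refine ⟨x ^ (m true + m false) * min 1 (runWeight m x true),
    max 1 (runWeight m x true) + max 1 (runWeight m x false), by positivity, fun n => ⟨?_, ?_⟩⟩
  · refine (le_ncard_boundedFrom_mul_pow hx₀ hx₁ hW.ge true n).trans ?_
    gcongr
    · exact (List.finite_length_eq Bool n).subset fun _ hs => hs.1
    · exact fun s hs => ⟨hs.1, hs.2.1⟩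
  · have hsub : {s : List Bool | s.length = n ∧ RunBounded m s} ⊆
        boundedFrom m true n ∪ boundedFrom m false n := by
      rintro s ⟨hlen, hs⟩
      by_cases h : s.head? = some false
      · exact Or.inr ⟨hlen, hs, by simp [h]⟩
      · exact Or.inl ⟨hlen, hs, h⟩
    have hle := (Set.ncard_le_ncard hsub ((boundedFrom_finite true n).union
      (boundedFrom_finite false n))).trans (Set.ncard_union_le _ _)
    calc ({s : List Bool | s.length = n ∧ RunBounded m s}.ncard : ℝ) * x ^ n
        ≤ ((boundedFrom m true n).ncard + (boundedFrom m false n).ncard) * x ^ n := by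
          gcongr
          exact_mod_cast hle
      _ = (boundedFrom m true n).ncard * x ^ n + (boundedFrom m false n).ncard * x ^ n :=
          add_mul _ _ _
      _ ≤ _ := add_le_add (ncard_boundedFrom_mul_pow_le hx₀.le hW.le true n)
            (ncard_boundedFrom_mul_pow_le hx₀.le hW.le false n)

theorem tendsto_log_div_of_mul_pow_bounds {a : ℕ → ℝ} {x c₁ c₂ : ℝ} (hx : 0 < x)
    (hc₁ : 0 < c₁) (h : ∀ n, c₁ ≤ a n * x ^ n ∧ a n * x ^ n ≤ c₂) :
    Tendsto (fun n : ℕ => log (a (n + 1)) / ((n : ℝ) + 1)) atTop (𝓝 (-log x)) := by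
  have hlim (c : ℝ) :
      Tendsto (fun n : ℕ => log c * (1 / ((n : ℝ) + 1)) - log x) atTop (𝓝 (-log x)) := by
    simpa using (tendsto_one_div_add_atTop_nhds_zero_nat.const_mul (log c)).sub_const (log x)
  have hval : ∀ n : ℕ, log (a (n + 1)) / ((n : ℝ) + 1) =
      log (a (n + 1) * x ^ (n + 1)) * (1 / ((n : ℝ) + 1)) - log x := by
    intro n
    have ha : 0 < a (n + 1) := pos_of_mul_pos_left (hc₁.trans_le (h (n + 1)).1) (by positivity)
    rw [log_mul ha.ne' (by positivity), log_pow]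
    field_simp
    push_cast
    ring
  refine tendsto_of_tendsto_of_tendsto_of_le_of_le (hlim c₁) (hlim c₂) (fun n => ?_) (fun n => ?_)
  · rw [hval]
    gcongr
    exact (h _).1
  · rw [hval]
    gcongr
    · exact hc₁.trans_le (h _).1
    · exact (h _).2

theorem jk_combinatorial_capacity_general
    (j k : ℕ)
    (N : ℕ → ℕ)
    (hN : ∀ n : ℕ, N n = {s : List Bool | s.length = n ∧
      ¬ (List.replicate (j + 1) true) <:+: s ∧
      ¬ (List.replicate (k + 1) false) <:+: s}.ncard)
    (s : ℝ) (hs_pos : 0 < s)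
    (hs_sol : (∑ a ∈ Finset.Icc 1 j, Real.exp (-(a : ℝ) * s)) *
        (∑ b ∈ Finset.Icc 1 k, Real.exp (-(b : ℝ) * s)) = 1) :
    Filter.limsup
        (fun n : ℕ => Real.log (N (n + 1)) / ((n : ℝ) + 1)) Filter.atTop
      = s := by
  set m : Bool → ℕ := fun c => bif c then j else k
  have hN' : ∀ n, N n = {t : List Bool | t.length = n ∧ RunBounded m t}.ncard := by
    intro n
    simp [hN, RunBounded, m, and_comm]
  have hW : runWeight m (exp (-s)) true * runWeight m (exp (-s)) false = 1 := by
    simpa [runWeight, m, ← exp_nat_mul, mul_comm] using hs_sol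
  obtain ⟨c₁, c₂, hc₁, hbounds⟩ := exists_ncard_runBounded_mul_pow_bounds (exp_pos (-s))
    (exp_le_one_iff.mpr (by linarith)) hW
  have := tendsto_log_div_of_mul_pow_bounds (a := fun n => (N n : ℝ)) (exp_pos (-s)) hc₁
    (fun n => by simpa [hN'] using hbounds n)
  rw [log_exp, neg_neg] at this
  exact this.limsup_eq

/-- **Combinatorial capacity of the `(j,k)` run-length constraint.** For
`j, k ≥ 1` with `j·k > 1`, let `N n` be the number of binary strings of length
`n` containing no run of more than `j` consecutive `1`s (i.e. not containing
`1^{j+1}` as an infix) and no run of more than `k` consecutive `0`s. Then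
`limsup_n (ln (N n)) / n` equals the unique positive real solution `s*` of
`(∑_{a=1}^{j} e^{-a·s}) · (∑_{b=1}^{k} e^{-b·s}) = 1`. -/
theorem jk_combinatorial_capacity
    (j k : ℕ) (hj : 1 ≤ j) (hk : 1 ≤ k) (hjk : 1 < j * k)
    (N : ℕ → ℕ)
    (hN : ∀ n : ℕ, N n = {s : List Bool | s.length = n ∧
      ¬ (List.replicate (j + 1) true) <:+: s ∧
      ¬ (List.replicate (k + 1) false) <:+: s}.ncard)
    (s : ℝ) (hs_pos : 0 < s)
    (hs_sol : (∑ a ∈ Finset.Icc 1 j, Real.exp (-(a : ℝ) * s)) *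
        (∑ b ∈ Finset.Icc 1 k, Real.exp (-(b : ℝ) * s)) = 1) :
    Filter.limsup
        (fun n : ℕ => Real.log (N (n + 1)) / ((n : ℝ) + 1)) Filter.atTop
      = s :=
  jk_combinatorial_capacity_general j k N hN s hs_pos hs_sol
end
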